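/- arXiv:2203.11424 — 3 statements merged into one kernel-verified Lean document; each statement's English description precedes it below -/
import Mathlib

section
/- Let f : ℝⁿ → ℝ be differentiable, γ ∈ (0,1), α > 0, η > 0, and x ∈ ℝⁿ. Suppose g̃(x) ∈ ℝⁿ satisfies ‖∇f(x) − g̃(x)‖ ≤ ((1−γ)/γ)·‖g̃(x)‖ and the Armijo condition f(x − η·g̃(x)) ≤ f(x) − α·η·‖g̃(x)‖². Then f(x − η·g̃(x)) ≤ f(x) − α·γ²·η·‖∇f(x)‖². -/
theorem stmt_1 {n : ℕ} (f : EuclideanSpace ℝ (Fin n) → ℝ) (hf : Differentiable ℝ f)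
    (g : EuclideanSpace ℝ (Fin n) → EuclideanSpace ℝ (Fin n))
    (x : EuclideanSpace ℝ (Fin n)) (γ α η : ℝ)
    (hγ0 : 0 < γ) (hγ1 : γ < 1) (hα : 0 < α) (hη : 0 < η)
    (herr : ‖gradient f x - g x‖ ≤ ((1 - γ) / γ) * ‖g x‖)
    (harmijo : f (x - η • g x) ≤ f x - α * η * ‖g x‖ ^ 2) :
    f (x - η • g x) ≤ f x - α * γ ^ 2 * η * ‖gradient f x‖ ^ 2 := by
  have hbound : ‖gradient f x‖ ≤ ‖g x‖ / γ := by
    have h1 : ‖gradient f x‖ ≤ ‖gradient f x - g x‖ + ‖g x‖ := by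
      calc ‖gradient f x‖ = ‖(gradient f x - g x) + g x‖ := by rw [sub_add_cancel]
        _ ≤ ‖gradient f x - g x‖ + ‖g x‖ := norm_add_le _ _
    have : ‖gradient f x‖ ≤ ((1 - γ) / γ) * ‖g x‖ + ‖g x‖ := by linarith
    calc ‖gradient f x‖ ≤ ((1 - γ) / γ) * ‖g x‖ + ‖g x‖ := this
      _ = ‖g x‖ / γ := by field_simp; ring
  have hsq : γ ^ 2 * ‖gradient f x‖ ^ 2 ≤ ‖g x‖ ^ 2 := by
    have h2 : ‖gradient f x‖ ^ 2 ≤ (‖g x‖ / γ) ^ 2 :=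
      pow_le_pow_left₀ (norm_nonneg _) hbound 2
    have : (‖g x‖ / γ) ^ 2 = ‖g x‖ ^ 2 / γ ^ 2 := by ring
    rw [this] at h2
    have hγ2 : (0:ℝ) < γ ^ 2 := by positivity
    calc γ ^ 2 * ‖gradient f x‖ ^ 2 ≤ γ ^ 2 * (‖g x‖ ^ 2 / γ ^ 2) := by
          exact mul_le_mul_of_nonneg_left h2 (le_of_lt hγ2)
      _ = ‖g x‖ ^ 2 := by field_simp
  have : α * γ ^ 2 * η * ‖gradient f x‖ ^ 2 ≤ α * η * ‖g x‖ ^ 2 := by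
    have := mul_le_mul_of_nonneg_left hsq (le_of_lt (mul_pos hα hη))
    nlinarith
  linarith
end

section
/- Let κ_min ∈ (0,1), κ_max ∈ (0,1) with κ_max ≠ 1 vacuously satisfied, γ ∈ (0,1), η_max > 0, L_r > 0, and let g̃_1 ∈ ℝⁿ with g̃_1 ≠ 0. Suppose sequences satisfy ‖g̃_{j+1}‖ ≥ κ_min·‖g̃_j‖ and ‖g̃_{j+1}‖ ≤ κ_max·‖g̃_j‖ and x_{j+1} = x_j − η_j·g̃_j with η_j ≤ η_max. If N satisfies log|κ_max^N − 1| + N·log(1/κ_min) ≤ log((1−γ)/(γ·η_max·L_r)) + log|κ_max − 1|, then L_r·∑_{j=1}^{N}‖x_{j+1} − x_j‖ ≤ ((1−γ)/γ)·‖g̃_{N+1}‖. -/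
theorem stmt_9 {n : ℕ} (κmin κmax γ ηmax Lr : ℝ)
    (hκmin0 : 0 < κmin) (hκmin1 : κmin < 1)
    (hκmax0 : 0 < κmax) (hκmax1 : κmax < 1)
    (hγ0 : 0 < γ) (hγ1 : γ < 1) (hηmax : 0 < ηmax) (hLr : 0 < Lr)
    (x g : ℕ → EuclideanSpace ℝ (Fin n)) (η : ℕ → ℝ)
    (hg1 : g 1 ≠ 0)
    (hup : ∀ j, x (j + 1) = x j - η j • g j)
    (hη : ∀ j, 0 < η j ∧ η j ≤ ηmax)
    (hlow : ∀ j, ‖g (j + 1)‖ ≥ κmin * ‖g j‖)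
    (hhigh : ∀ j, ‖g (j + 1)‖ ≤ κmax * ‖g j‖)
    (N : ℕ) (hN : 1 ≤ N)
    (hcond : Real.log |κmax ^ N - 1| + N * Real.log (1 / κmin) ≤
      Real.log ((1 - γ) / (γ * ηmax * Lr)) + Real.log |κmax - 1|) :
    Lr * ∑ j ∈ Finset.Icc 1 N, ‖x (j + 1) - x j‖ ≤ ((1 - γ) / γ) * ‖g (N + 1)‖ := by
  have hg1n : 0 < ‖g 1‖ := norm_pos_iff.mpr hg1
  -- upper bound for g norms
  have gup : ∀ k : ℕ, ‖g (1 + k)‖ ≤ κmax ^ k * ‖g 1‖ := by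
    intro k
    induction k with
    | zero => simp
    | succ k ih =>
      have : ‖g (1 + k + 1)‖ ≤ κmax * ‖g (1 + k)‖ := hhigh _
      calc ‖g (1 + (k + 1))‖ = ‖g (1 + k + 1)‖ := by ring_nf
        _ ≤ κmax * ‖g (1 + k)‖ := hhigh _
        _ ≤ κmax * (κmax ^ k * ‖g 1‖) := by
            exact mul_le_mul_of_nonneg_left ih hκmax0.le
        _ = κmax ^ (k + 1) * ‖g 1‖ := by ring
  have glow : ∀ k : ℕ, κmin ^ k * ‖g 1‖ ≤ ‖g (1 + k)‖ := by
    intro k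
    induction k with
    | zero => simp
    | succ k ih =>
      calc κmin ^ (k + 1) * ‖g 1‖ = κmin * (κmin ^ k * ‖g 1‖) := by ring
        _ ≤ κmin * ‖g (1 + k)‖ := mul_le_mul_of_nonneg_left ih hκmin0.le
        _ ≤ ‖g (1 + k + 1)‖ := hlow _
        _ = ‖g (1 + (k + 1))‖ := by ring_nf
  -- norms of steps
  have hstep : ∀ j : ℕ, ‖x (j + 1) - x j‖ = η j * ‖g j‖ := by
    intro j
    rw [hup j]
    have : x j - η j • g j - x j = -(η j • g j) := by abel
    rw [this, norm_neg, norm_smul, Real.norm_eq_abs, abs_of_pos (hη j).1]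
  -- key numeric inequality from hcond
  have hA : 0 < 1 - κmax ^ N := by
    have : κmax ^ N < 1 := pow_lt_one₀ hκmax0.le hκmax1 (by omega)
    linarith
  have hB : 0 < 1 - κmax := by linarith
  have hC : 0 < (1 - γ) / (γ * ηmax * Lr) := div_pos (by linarith) (by positivity)
  have hκminN : 0 < κmin ^ N := pow_pos hκmin0 N
  have hkey : (1 - κmax ^ N) * (1 / κmin) ^ N ≤ ((1 - γ) / (γ * ηmax * Lr)) * (1 - κmax) := by
    have h1 : |κmax ^ N - 1| = 1 - κmax ^ N := by
      rw [abs_sub_comm, abs_of_pos hA]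
    have h2 : |κmax - 1| = 1 - κmax := by
      rw [abs_sub_comm, abs_of_pos hB]
    rw [h1, h2] at hcond
    have hl : Real.log (1 - κmax ^ N) + (N : ℝ) * Real.log (1 / κmin)
        = Real.log ((1 - κmax ^ N) * (1 / κmin) ^ N) := by
      rw [Real.log_mul (ne_of_gt hA) (by positivity), Real.log_pow]
    have hr : Real.log ((1 - γ) / (γ * ηmax * Lr)) + Real.log (1 - κmax)
        = Real.log (((1 - γ) / (γ * ηmax * Lr)) * (1 - κmax)) := by
      rw [Real.log_mul (ne_of_gt hC) (ne_of_gt hB)]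
    rw [hl, hr] at hcond
    have := (Real.log_le_log_iff (by positivity) (by positivity)).mp hcond
    exact this
  -- translate hkey
  have hGLpos : 0 < γ * ηmax * Lr := by positivity
  have hkey2 : Lr * ηmax * ((1 - κmax ^ N) / (1 - κmax)) ≤ ((1 - γ) / γ) * κmin ^ N := by
    have h2 : (1 - κmax ^ N) * (γ * ηmax * Lr) ≤ (1 - γ) * (1 - κmax) * κmin ^ N := by
      rw [show (1 - κmax ^ N) * (1 / κmin) ^ N = (1 - κmax ^ N) / κmin ^ N by
            rw [div_pow, one_pow]; ring,
          div_le_iff₀ hκminN,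
          show (1 - γ) / (γ * ηmax * Lr) * (1 - κmax) * κmin ^ N
            = ((1 - γ) * (1 - κmax) * κmin ^ N) / (γ * ηmax * Lr) by ring,
          le_div_iff₀ hGLpos] at hkey
      exact hkey
    rw [show Lr * ηmax * ((1 - κmax ^ N) / (1 - κmax))
          = (Lr * ηmax * (1 - κmax ^ N)) / (1 - κmax) by ring,
        div_le_iff₀ hB,
        show (1 - γ) / γ * κmin ^ N * (1 - κmax)
          = ((1 - γ) * κmin ^ N * (1 - κmax)) / γ by ring,
        le_div_iff₀ hγ0]
    nlinarith [h2]
  -- bound the sum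
  have hsum : ∑ j ∈ Finset.Icc 1 N, ‖x (j + 1) - x j‖
      ≤ ηmax * ‖g 1‖ * ((1 - κmax ^ N) / (1 - κmax)) := by
    have hgeom : ∑ i ∈ Finset.range N, κmax ^ i = (1 - κmax ^ N) / (1 - κmax) := by
      rw [geom_sum_eq (ne_of_lt hκmax1)]
      rw [div_eq_div_iff (by linarith) (by linarith)]
      ring
    calc ∑ j ∈ Finset.Icc 1 N, ‖x (j + 1) - x j‖
        ≤ ∑ j ∈ Finset.Icc 1 N, ηmax * (κmax ^ (j - 1) * ‖g 1‖) := by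
          apply Finset.sum_le_sum
          intro j hj
          rw [Finset.mem_Icc] at hj
          rw [hstep j]
          have hj1 : j = 1 + (j - 1) := by omega
          have hgj : ‖g j‖ ≤ κmax ^ (j - 1) * ‖g 1‖ := by
            rw [hj1]; simpa using gup (j - 1)
          have := (hη j).2
          have hgjn : 0 ≤ ‖g j‖ := norm_nonneg _
          nlinarith [pow_pos hκmax0 (j - 1), (hη j).1]
      _ = ηmax * ‖g 1‖ * ∑ j ∈ Finset.Icc 1 N, κmax ^ (j - 1) := by
          rw [Finset.mul_sum]; apply Finset.sum_congr rfl; intro j _; ring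
      _ = ηmax * ‖g 1‖ * ∑ i ∈ Finset.range N, κmax ^ i := by
          congr 1
          rw [← Finset.Ico_add_one_right_eq_Icc, Finset.sum_Ico_eq_sum_range]
          apply Finset.sum_congr (by norm_num)
          intro i _; congr 1; omega
      _ = ηmax * ‖g 1‖ * ((1 - κmax ^ N) / (1 - κmax)) := by rw [hgeom]
  have hgN : κmin ^ N * ‖g 1‖ ≤ ‖g (N + 1)‖ := by
    have := glow N
    rwa [add_comm 1 N] at this
  calc Lr * ∑ j ∈ Finset.Icc 1 N, ‖x (j + 1) - x j‖
      ≤ Lr * (ηmax * ‖g 1‖ * ((1 - κmax ^ N) / (1 - κmax))) :=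
        mul_le_mul_of_nonneg_left hsum hLr.le
    _ = (Lr * ηmax * ((1 - κmax ^ N) / (1 - κmax))) * ‖g 1‖ := by ring
    _ ≤ (((1 - γ) / γ) * κmin ^ N) * ‖g 1‖ :=
        mul_le_mul_of_nonneg_right hkey2 hg1n.le
    _ = ((1 - γ) / γ) * (κmin ^ N * ‖g 1‖) := by ring
    _ ≤ ((1 - γ) / γ) * ‖g (N + 1)‖ := by
        exact mul_le_mul_of_nonneg_left hgN (div_nonneg (by linarith) hγ0.le)
end

section
/- Let κ_min ∈ (0,1), γ ∈ (0,1), η_max > 0, L_r > 0, and g̃_1 ∈ ℝⁿ with g̃_1 ≠ 0. Suppose ‖g̃_{j+1}‖ ≥ κ_min·‖g̃_j‖ and ‖g̃_{j+1}‖ ≤ ‖g̃_j‖ and x_{j+1} = x_j − η_j·g̃_j with 0 < η_j ≤ η_max for all j. If N ≥ 1 satisfies log N + N·log(1/κ_min) ≤ log((1−γ)/(γ·η_max·L_r)), then L_r·∑_{j=1}^{N}‖x_{j+1} − x_j‖ ≤ ((1−γ)/γ)·‖g̃_{N+1}‖. -/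
theorem stmt_10 {n : ℕ} (κmin γ ηmax Lr : ℝ)
    (hκmin0 : 0 < κmin) (hκmin1 : κmin < 1)
    (hγ0 : 0 < γ) (hγ1 : γ < 1) (hηmax : 0 < ηmax) (hLr : 0 < Lr)
    (x g : ℕ → EuclideanSpace ℝ (Fin n)) (η : ℕ → ℝ)
    (hg1 : g 1 ≠ 0)
    (hup : ∀ j, x (j + 1) = x j - η j • g j)
    (hη : ∀ j, 0 < η j ∧ η j ≤ ηmax)
    (hlow : ∀ j, ‖g (j + 1)‖ ≥ κmin * ‖g j‖)
    (hhigh : ∀ j, ‖g (j + 1)‖ ≤ ‖g j‖)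
    (N : ℕ) (hN : 1 ≤ N)
    (hcond : Real.log N + N * Real.log (1 / κmin) ≤
      Real.log ((1 - γ) / (γ * ηmax * Lr))) :
    Lr * ∑ j ∈ Finset.Icc 1 N, ‖x (j + 1) - x j‖ ≤ ((1 - γ) / γ) * ‖g (N + 1)‖ := by
  have hg1pos : 0 < ‖g 1‖ := norm_pos_iff.mpr hg1
  -- monotone decrease from 1
  have hmono : ∀ j, 1 ≤ j → ‖g j‖ ≤ ‖g 1‖ := by
    intro j hj
    induction j with
    | zero => omega
    | succ k ih =>
      rcases Nat.eq_or_lt_of_le hj with h | h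
      · simp [← h]
      · exact (hhigh k).trans (ih (by omega))
  -- lower bound
  have hlb : ∀ m, κmin ^ m * ‖g 1‖ ≤ ‖g (m + 1)‖ := by
    intro m
    induction m with
    | zero => simp
    | succ k ih =>
      calc κmin ^ (k + 1) * ‖g 1‖ = κmin * (κmin ^ k * ‖g 1‖) := by ring
        _ ≤ κmin * ‖g (k + 1)‖ := by
            exact mul_le_mul_of_nonneg_left ih hκmin0.le
        _ ≤ ‖g (k + 1 + 1)‖ := hlow (k + 1)
  -- step norms
  have hstep : ∀ j, 1 ≤ j → ‖x (j + 1) - x j‖ ≤ ηmax * ‖g 1‖ := by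
    intro j hj
    have : x (j + 1) - x j = -(η j • g j) := by rw [hup j]; abel
    rw [this, norm_neg, norm_smul, Real.norm_eq_abs, abs_of_pos (hη j).1]
    exact mul_le_mul (hη j).2 (hmono j hj) (norm_nonneg _) hηmax.le
  have hsum : ∑ j ∈ Finset.Icc 1 N, ‖x (j + 1) - x j‖ ≤ N * (ηmax * ‖g 1‖) := by
    calc ∑ j ∈ Finset.Icc 1 N, ‖x (j + 1) - x j‖
        ≤ ∑ j ∈ Finset.Icc 1 N, (ηmax * ‖g 1‖) :=
          Finset.sum_le_sum fun j hj => hstep j (Finset.mem_Icc.mp hj).1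
      _ = N * (ηmax * ‖g 1‖) := by
          rw [Finset.sum_const, Nat.card_Icc]; simp
  -- exponential condition
  have hC : 0 < (1 - γ) / (γ * ηmax * Lr) := div_pos (by linarith) (by positivity)
  have hNpos : (0 : ℝ) < N := by exact_mod_cast hN
  have hinv : (1 : ℝ) < 1 / κmin := by
    rw [lt_div_iff₀ hκmin0]; linarith
  have hkey : (N : ℝ) * (1 / κmin) ^ N ≤ (1 - γ) / (γ * ηmax * Lr) := by
    have hpos : 0 < (N : ℝ) * (1 / κmin) ^ N := mul_pos hNpos (by positivity)
    have hlog : Real.log ((N : ℝ) * (1 / κmin) ^ N) =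
        Real.log N + N * Real.log (1 / κmin) := by
      rw [Real.log_mul (ne_of_gt hNpos) (by positivity), Real.log_pow]
    have := hcond
    rw [← hlog] at this
    calc (N : ℝ) * (1 / κmin) ^ N = Real.exp (Real.log ((N : ℝ) * (1 / κmin) ^ N)) :=
          (Real.exp_log hpos).symm
      _ ≤ Real.exp (Real.log ((1 - γ) / (γ * ηmax * Lr))) := Real.exp_le_exp.mpr this
      _ = (1 - γ) / (γ * ηmax * Lr) := Real.exp_log hC
  -- combine
  have hg1le : ‖g 1‖ ≤ (1 / κmin) ^ N * ‖g (N + 1)‖ := by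
    have h := hlb N
    have hκN : 0 < κmin ^ N := by positivity
    rw [one_div, inv_pow, ← div_eq_inv_mul, le_div_iff₀ hκN]
    linarith [h]
  have hfin : Lr * ((N : ℝ) * (ηmax * ‖g 1‖)) ≤ ((1 - γ) / γ) * ‖g (N + 1)‖ := by
    calc Lr * ((N : ℝ) * (ηmax * ‖g 1‖))
        ≤ Lr * ((N : ℝ) * (ηmax * ((1 / κmin) ^ N * ‖g (N + 1)‖))) := by
          have : 0 ≤ Lr * ((N : ℝ) * ηmax) := by positivity
          nlinarith [mul_le_mul_of_nonneg_left hg1le this]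
      _ = (N : ℝ) * (1 / κmin) ^ N * (Lr * ηmax * ‖g (N + 1)‖) := by ring
      _ ≤ (1 - γ) / (γ * ηmax * Lr) * (Lr * ηmax * ‖g (N + 1)‖) := by
          apply mul_le_mul_of_nonneg_right hkey; positivity
      _ = ((1 - γ) / γ) * ‖g (N + 1)‖ := by
          field_simp
  calc Lr * ∑ j ∈ Finset.Icc 1 N, ‖x (j + 1) - x j‖
      ≤ Lr * ((N : ℝ) * (ηmax * ‖g 1‖)) := mul_le_mul_of_nonneg_left hsum hLr.le
    _ ≤ ((1 - γ) / γ) * ‖g (N + 1)‖ := hfin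
end
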